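/- Let ι be a finite index type, for each j ∈ ι let α_j be a finite type, and let X_j (j ∈ ι) be random variables on a probability space (Ω, μ) with X_j taking values in α_j. Let 𝓜 be a finite type, φ : (Π j, α_j) → 𝓜, and M = φ(fun j => X_j). Let m be a finite set of receivers and for each receiver i let H(i) ⊆ ι. Suppose for each receiver i there is a map ψ_i such that ψ_i(M, (X_j)_{j ∈ H(i)}) = (X_j)_{j ∈ H(i)ᶜ} almost surely. Then H[M] ≥ H[(X_j)_{j ∈ H(i)ᶜ} | (X_j)_{j ∈ H(i)}] for every receiver i; in particular H[M] ≥ max over receivers i of H[(X_j)_{j ∈ H(i)ᶜ} | (X_j)_{j ∈ H(i)}]. -/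

import Mathlib

/-!
Receiver `i` sees `Z = (X_j)_{j ∈ H i}` and `M`, and decodes `Y = (X_j)_{j ∉ H i}` as
`ψ (M, Z)`. Hence `H[Z, Y] = H[Z, ψ (M, Z)] ≤ H[M, Z] ≤ H[M] + H[Z]` by data processing and
subadditivity of entropy, which is `H[Y | Z] ≤ H[M]`.
-/

open MeasureTheory

/-- Shannon entropy of a random variable taking values in a finite type. -/
noncomputable def ent {Ω : Type*} [MeasurableSpace Ω] (μ : Measure Ω)
    {α : Type*} [Fintype α] (X : Ω → α) : ℝ :=
  ∑ a : α, Real.negMulLog ((μ (X ⁻¹' {a})).toReal)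

/-- `condEnt μ X Y` is the conditional Shannon entropy `H[Y | X]`. -/
noncomputable def condEnt {Ω : Type*} [MeasurableSpace Ω] (μ : Measure Ω)
    {α β : Type*} [Fintype α] [Fintype β] (X : Ω → α) (Y : Ω → β) : ℝ :=
  ent μ (fun ω => (X ω, Y ω)) - ent μ X

namespace Real

theorem negMulLog_sum_le {κ : Type*} (s : Finset κ) {p : κ → ℝ}
    (hp : ∀ k ∈ s, 0 ≤ p k) :
    negMulLog (∑ k ∈ s, p k) ≤ ∑ k ∈ s, negMulLog (p k) := by
  have hsum : negMulLog (∑ k ∈ s, p k) = ∑ k ∈ s, -p k * log (∑ k ∈ s, p k) := by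
    rw [← Finset.sum_mul, Finset.sum_neg_distrib, negMulLog]
  rw [hsum]
  refine Finset.sum_le_sum fun k hk => ?_
  rcases (hp k hk).eq_or_lt with h0 | h0
  · simp [← h0]
  · have hle : log (p k) ≤ log (∑ k ∈ s, p k) := log_le_log h0 (Finset.single_le_sum hp hk)
    rw [negMulLog]
    nlinarith

theorem negMulLog_le_neg_mul_log_add_sub {p q : ℝ} (hp : 0 ≤ p) (hq : 0 ≤ q)
    (hpq : p ≠ 0 → q ≠ 0) : negMulLog p ≤ -p * log q + (q - p) := by
  rcases hp.eq_or_lt with rfl | hp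
  · simpa using hq
  have hq : 0 < q := hq.lt_of_ne' (hpq hp.ne')
  have hlog : log (q / p) ≤ q / p - 1 := log_le_sub_one_of_pos (by positivity)
  rw [log_div hq.ne' hp.ne'] at hlog
  have hscaled := mul_le_mul_of_nonneg_left hlog hp.le
  rw [mul_sub, mul_sub, mul_div_cancel₀ q hp.ne', mul_one] at hscaled
  rw [negMulLog]
  linarith

end Real

section Entropy

variable {Ω : Type*} [MeasurableSpace Ω] (μ : Measure Ω)
  {α β γ : Type*}

noncomputable def probMass (X : Ω → α) (a : α) : ℝ :=
  (μ (X ⁻¹' {a})).toReal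

theorem ent_eq_sum_negMulLog_probMass [Fintype α] (X : Ω → α) :
    ent μ X = ∑ a, Real.negMulLog (probMass μ X a) :=
  rfl

theorem ent_eq_sum_neg_log_mul_probMass [Fintype α] (X : Ω → α) :
    ent μ X = ∑ a, -Real.log (probMass μ X a) * probMass μ X a := by
  rw [ent_eq_sum_negMulLog_probMass]
  refine Finset.sum_congr rfl fun a _ => ?_
  rw [Real.negMulLog]
  ring

theorem probMass_nonneg (X : Ω → α) (a : α) : 0 ≤ probMass μ X a :=
  ENNReal.toReal_nonneg

theorem ent_congr_ae [Fintype α] {X Y : Ω → α} (h : X =ᵐ[μ] Y) : ent μ X = ent μ Y := by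
  refine Finset.sum_congr rfl fun a _ => ?_
  have hpre : X ⁻¹' {a} =ᵐ[μ] Y ⁻¹' {a} := by
    rw [Filter.eventuallyEq_set]
    filter_upwards [h] with ω hω
    simp [hω]
  rw [measure_congr hpre]

section Measurable

variable [MeasurableSpace α] [MeasurableSingletonClass α] {X : Ω → α}

theorem sum_probMass_eq [IsFiniteMeasure μ] (hX : Measurable X) (s : Finset α) :
    ∑ a ∈ s, probMass μ X a = (μ (X ⁻¹' s)).toReal := by
  simp only [probMass]
  rw [← ENNReal.toReal_sum fun a _ => measure_ne_top μ _,
    sum_measure_preimage_singleton s fun a _ => hX (measurableSet_singleton a)]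

theorem sum_probMass [Fintype α] [IsProbabilityMeasure μ] (hX : Measurable X) :
    ∑ a, probMass μ X a = 1 := by
  simp [sum_probMass_eq μ hX]

theorem probMass_comp [Fintype α] [IsFiniteMeasure μ] [DecidableEq β] (hX : Measurable X)
    (f : α → β) (b : β) : probMass μ (f ∘ X) b = ∑ a with f a = b, probMass μ X a := by
  rw [sum_probMass_eq μ hX, probMass]
  congr 2
  ext ω
  simp

theorem probMass_le_probMass_comp [Fintype α] [IsFiniteMeasure μ] (hX : Measurable X)
    (f : α → β) (a : α) : probMass μ X a ≤ probMass μ (f ∘ X) (f a) := by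
  classical
  rw [probMass_comp μ hX f]
  exact Finset.single_le_sum (fun a _ => probMass_nonneg μ X a) (by simp)

theorem sum_mul_probMass_comp [Fintype α] [Fintype β] [IsFiniteMeasure μ] (hX : Measurable X)
    (f : α → β) (g : β → ℝ) :
    ∑ a, g (f a) * probMass μ X a = ∑ b, g b * probMass μ (f ∘ X) b := by
  classical
  simp_rw [probMass_comp μ hX f, Finset.mul_sum]
  rw [← Finset.sum_fiberwise Finset.univ f]
  refine Finset.sum_congr rfl fun b _ => Finset.sum_congr rfl fun a ha => ?_
  rw [(Finset.mem_filter.mp ha).2]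

theorem ent_comp_le [Fintype α] [Fintype β] [IsFiniteMeasure μ] (hX : Measurable X)
    (f : α → β) : ent μ (f ∘ X) ≤ ent μ X := by
  classical
  calc ent μ (f ∘ X)
      = ∑ b, Real.negMulLog (∑ a with f a = b, probMass μ X a) := by
        simp_rw [ent_eq_sum_negMulLog_probMass, probMass_comp μ hX f]
    _ ≤ ∑ b, ∑ a with f a = b, Real.negMulLog (probMass μ X a) :=
        Finset.sum_le_sum fun b _ =>
          Real.negMulLog_sum_le _ fun a _ => probMass_nonneg μ X a
    _ = ent μ X := Finset.sum_fiberwise Finset.univ f _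

/-- Gibbs' inequality against the product of the marginals. -/
theorem ent_prod_le [Fintype α] [Fintype β] [IsProbabilityMeasure μ] [MeasurableSpace β]
    [MeasurableSingletonClass β] {Y : Ω → β} (hX : Measurable X) (hY : Measurable Y) :
    ent μ (fun ω => (X ω, Y ω)) ≤ ent μ X + ent μ Y := by
  set Z := fun ω => (X ω, Y ω)
  have hZ : Measurable Z := hX.prodMk hY
  set P := probMass μ X
  set Q := probMass μ Y
  set r := probMass μ Z
  have hr : ∀ c, 0 ≤ r c := probMass_nonneg μ Z
  have hP_ne : ∀ c, r c ≠ 0 → P c.1 ≠ 0 := fun c hc =>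
    ((hr c).lt_of_ne' hc |>.trans_le (probMass_le_probMass_comp μ hZ Prod.fst c)).ne'
  have hQ_ne : ∀ c, r c ≠ 0 → Q c.2 ≠ 0 := fun c hc =>
    ((hr c).lt_of_ne' hc |>.trans_le (probMass_le_probMass_comp μ hZ Prod.snd c)).ne'
  have hsplit : ∀ c : α × β,
      -r c * Real.log (P c.1 * Q c.2) = -Real.log (P c.1) * r c + -Real.log (Q c.2) * r c := by
    intro c
    by_cases hc : r c = 0
    · simp [hc]
    · rw [Real.log_mul (hP_ne c hc) (hQ_ne c hc)]
      ring
  have hprod : ∑ c : α × β, P c.1 * Q c.2 = 1 := by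
    rw [Fintype.sum_prod_type, ← Finset.sum_mul_sum, sum_probMass μ hX, sum_probMass μ hY,
      one_mul]
  calc ent μ Z = ∑ c, Real.negMulLog (r c) := rfl
    _ ≤ ∑ c, (-r c * Real.log (P c.1 * Q c.2) + (P c.1 * Q c.2 - r c)) :=
        Finset.sum_le_sum fun c _ => Real.negMulLog_le_neg_mul_log_add_sub (hr c)
          (mul_nonneg (probMass_nonneg μ X _) (probMass_nonneg μ Y _))
          fun hc => mul_ne_zero (hP_ne c hc) (hQ_ne c hc)
    _ = ∑ c, -Real.log (P c.1) * r c + ∑ c, -Real.log (Q c.2) * r c := by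
        simp_rw [hsplit]
        rw [Finset.sum_add_distrib, Finset.sum_add_distrib, Finset.sum_sub_distrib, hprod,
          sum_probMass μ hZ]
        ring
    _ = ent μ X + ent μ Y := by
        rw [sum_mul_probMass_comp μ hZ Prod.fst fun a => -Real.log (P a),
          sum_mul_probMass_comp μ hZ Prod.snd fun b => -Real.log (Q b),
          ent_eq_sum_neg_log_mul_probMass, ent_eq_sum_neg_log_mul_probMass]
        rfl

end Measurable

theorem condEnt_le_ent_of_ae_eq_decode [Fintype α] [Fintype β] [Fintype γ]
    [IsProbabilityMeasure μ] [MeasurableSpace α] [MeasurableSingletonClass α]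
    [MeasurableSpace γ] [MeasurableSingletonClass γ] {Z : Ω → α} {Y : Ω → β} {M : Ω → γ}
    (hZ : Measurable Z) (hM : Measurable M) (ψ : γ × α → β)
    (hψ : ∀ᵐ ω ∂μ, ψ (M ω, Z ω) = Y ω) : condEnt μ Z Y ≤ ent μ M := by
  rw [condEnt, sub_le_iff_le_add]
  calc ent μ (fun ω => (Z ω, Y ω))
      = ent μ ((fun p => (p.2, ψ p)) ∘ fun ω => (M ω, Z ω)) := by
        refine ent_congr_ae μ ?_
        filter_upwards [hψ] with ω hω
        simp [hω]
    _ ≤ ent μ (fun ω => (M ω, Z ω)) := ent_comp_le μ (hM.prodMk hZ) _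
    _ ≤ ent μ M + ent μ Z := ent_prod_le μ hM hZ

end Entropy

theorem complementary_delivery_index_coding_converse_general
    {Ω : Type*} [MeasurableSpace Ω] (μ : Measure Ω) [IsProbabilityMeasure μ]
    {ι : Type*} [Fintype ι] [DecidableEq ι]
    {α : ι → Type*} [∀ j, Fintype (α j)]
    [∀ j, MeasurableSpace (α j)] [∀ j, MeasurableSingletonClass (α j)]
    (X : ∀ j, Ω → α j) (hX : ∀ j, Measurable (X j))
    {𝓜 : Type*} [Fintype 𝓜] (φ : (∀ j, α j) → 𝓜)
    {R : Type*} (H : R → Finset ι)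
    (hdec : ∀ i : R, ∃ ψ : 𝓜 × (∀ j : (H i : Finset ι), α j) → (∀ j : ((H i)ᶜ : Finset ι), α j),
      ∀ᵐ ω ∂μ, ψ (φ (fun j => X j ω), fun j => X j ω) = fun j : ((H i)ᶜ : Finset ι) => X j ω) :
    ∀ i : R, ent μ (fun ω => φ (fun j => X j ω)) ≥
      condEnt μ (fun ω => fun j : (H i : Finset ι) => X j ω)
        (fun ω => fun j : ((H i)ᶜ : Finset ι) => X j ω) := by
  intro i
  obtain ⟨ψ, hψ⟩ := hdec i
  let _ : MeasurableSpace 𝓜 := ⊤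
  have _ : MeasurableSingletonClass 𝓜 := ⟨fun _ => trivial⟩
  exact condEnt_le_ent_of_ae_eq_decode μ (measurable_pi_lambda _ fun j => hX j)
    ((measurable_of_countable φ).comp (measurable_pi_lambda _ hX)) ψ hψ

/-- Cut-set converse for complementary delivery index coding: a server broadcasts
`M = φ(X)` of the message tuple `X = (X_j)_{j ∈ ι}`; if every receiver `i`, which
has side information `(X_j)_{j ∈ H i}`, can recover `(X_j)_{j ∈ (H i)ᶜ}` almost
surely from `M` and its side information, then for every receiver `i`,
`H[M] ≥ H[(X_j)_{j ∈ (H i)ᶜ} | (X_j)_{j ∈ H i}]` (hence `H[M]` is at least the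
maximum of these quantities over receivers). -/
theorem complementary_delivery_index_coding_converse
    {Ω : Type*} [MeasurableSpace Ω] (μ : Measure Ω) [IsProbabilityMeasure μ]
    {ι : Type*} [Fintype ι] [DecidableEq ι]
    {α : ι → Type*} [∀ j, Fintype (α j)]
    [∀ j, MeasurableSpace (α j)] [∀ j, MeasurableSingletonClass (α j)]
    (X : ∀ j, Ω → α j) (hX : ∀ j, Measurable (X j))
    {𝓜 : Type*} [Fintype 𝓜] (φ : (∀ j, α j) → 𝓜)
    {R : Type*} [Fintype R] (H : R → Finset ι)
    (hdec : ∀ i : R, ∃ ψ : 𝓜 × (∀ j : (H i : Finset ι), α j) → (∀ j : ((H i)ᶜ : Finset ι), α j),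
      ∀ᵐ ω ∂μ, ψ (φ (fun j => X j ω), fun j => X j ω) = fun j : ((H i)ᶜ : Finset ι) => X j ω) :
    ∀ i : R, ent μ (fun ω => φ (fun j => X j ω)) ≥
      condEnt μ (fun ω => fun j : (H i : Finset ι) => X j ω)
        (fun ω => fun j : ((H i)ᶜ : Finset ι) => X j ω) :=
  complementary_delivery_index_coding_converse_general μ X hX φ H hdec
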